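/- For every behavior policy μ ∈ Λ, every t ∈ {0,…,T−2}, and every state s, the law of total variance over the action at time t gives: Var(G^PDIS(τ^{μ_{t:T−1}}_{t:T−1}) | S_t = s) = Σ_{a : μ_t(a|s)>0} μ_t(a|s)·ρ_t(a|s)²·Var(G^PDIS(τ^{μ_{t+1:T−1}}_{t+1:T−1}) | S_t = s, A_t = a) + Var_{a∼μ_t(·|s)}(ρ_t(a|s)·q_{π,t}(s,a)), where ρ_t(a|s) = π_t(a|s)/μ_t(a|s). -/
import Mathlib


open Finset

section MDPDefs

variable {S A : Type} [Fintype S] [Fintype A]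

/-- State value `v_{π,t}(s)` of policy `π` for reward `r`, with `n` remaining steps at
time `t`; the paper's `v_{π,t}(s)` (horizon `T`) is `vval p r π (T − t) t s`. -/
noncomputable def vval (p : S → A → S → ℝ) (r : S → A → ℝ) (π : ℕ → S → A → ℝ) :
    ℕ → ℕ → S → ℝ
  | 0, _, _ => 0
  | n + 1, t, s => ∑ a, π t s a * (r s a + ∑ s', p s a s' * vval p r π n (t + 1) s')

/-- Action value `q_{π,t}(s,a) = r(s,a) + ∑_{s'} p(s'|s,a) v_{π,t+1}(s')`, where `n`
steps remain after the current one; the paper's `q_{π,t}` is `qval p r π (T − t − 1) t`. -/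
noncomputable def qval (p : S → A → S → ℝ) (r : S → A → ℝ) (π : ℕ → S → A → ℝ)
    (n t : ℕ) (s : S) (a : A) : ℝ :=
  r s a + ∑ s', p s a s' * vval p r π n (t + 1) s'

/-- `ν_{π,t}(s,a) = Var_{s' ∼ p(·|s,a)}(v_{π,t+1}(s'))`, with `n = T − t − 1`
remaining steps after the current one (in particular `ν_{π,T−1} ≡ 0` since `v_{π,T} ≡ 0`). -/
noncomputable def nuVar (p : S → A → S → ℝ) (r : S → A → ℝ) (π : ℕ → S → A → ℝ)
    (n t : ℕ) (s : S) (a : A) : ℝ :=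
  (∑ s', p s a s' * (vval p r π n (t + 1) s') ^ 2)
    - (∑ s', p s a s' * vval p r π n (t + 1) s') ^ 2

/-- Probability, under behavior policy `μ`, of the trajectory
`τ = (A_t, S_{t+1}, A_{t+1}, …, S_{t+n})` of `n` steps starting from state `s` at
time `t`: actions `A_k ∼ μ_k(·|S_k)` and states `S_{k+1} ∼ p(·|S_k, A_k)`. -/
noncomputable def trajProb (p : S → A → S → ℝ) (μ : ℕ → S → A → ℝ) :
    (n : ℕ) → ℕ → S → (Fin n → A × S) → ℝ
  | 0, _, _, _ => 1
  | n + 1, t, s, τ =>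
      μ t s (τ 0).1 * p s (τ 0).1 (τ 0).2 *
        trajProb p μ n (t + 1) (τ 0).2 (fun i => τ i.succ)

/-- PDIS return `G^PDIS(τ^{μ_{t:t+n−1}}_{t:t+n−1}) = ∑_{k=t}^{t+n−1} (∏_{j=t}^{k} ρ_j) R_{k+1}`
(in its equivalent recursive form) along trajectory `τ` from state `s` at time `t`,
where `ρ_j = π_j(A_j|S_j)/μ_j(A_j|S_j)` and `R_{k+1} = r(S_k, A_k)`. -/
noncomputable def pdis (r : S → A → ℝ) (π μ : ℕ → S → A → ℝ) :
    (n : ℕ) → ℕ → S → (Fin n → A × S) → ℝ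
  | 0, _, _, _ => 0
  | n + 1, t, s, τ =>
      π t s (τ 0).1 / μ t s (τ 0).1 *
        (r s (τ 0).1 + pdis r π μ n (t + 1) (τ 0).2 (fun i => τ i.succ))

/-- Conditional expectation `E[f(τ) | S_t = s]` over `n`-step trajectories generated
by the behavior policy `μ` from state `s` at time `t`. -/
noncomputable def expTraj (p : S → A → S → ℝ) (μ : ℕ → S → A → ℝ) (n t : ℕ) (s : S)
    (f : (Fin n → A × S) → ℝ) : ℝ :=
  ∑ τ : Fin n → A × S, trajProb p μ n t s τ * f τ

/-- Conditional variance `Var(G^PDIS(τ^{μ_{t:T−1}}_{t:T−1}) | S_t = s)` with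
`n = T − t` remaining steps. -/
noncomputable def pdisVar (p : S → A → S → ℝ) (r : S → A → ℝ) (π μ : ℕ → S → A → ℝ)
    (n t : ℕ) (s : S) : ℝ :=
  expTraj p μ n t s (fun τ => (pdis r π μ n t s τ) ^ 2)
    - (expTraj p μ n t s (pdis r π μ n t s)) ^ 2

/-- Conditional variance `Var(G^PDIS(τ^{μ_{t+1:T−1}}_{t+1:T−1}) | S_t = s, A_t = a)`,
where `S_{t+1} ∼ p(·|s,a)` and then the trajectory is generated by `μ` from `S_{t+1}`;
here `n = T − t − 1`. -/
noncomputable def pdisVarSA (p : S → A → S → ℝ) (r : S → A → ℝ) (π μ : ℕ → S → A → ℝ)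
    (n t : ℕ) (s : S) (a : A) : ℝ :=
  (∑ s', p s a s' * expTraj p μ n (t + 1) s' (fun τ => (pdis r π μ n (t + 1) s' τ) ^ 2))
    - (∑ s', p s a s' * expTraj p μ n (t + 1) s' (pdis r π μ n (t + 1) s')) ^ 2

/-- Extended reward `r̃_t(s,a)` (horizon `T`) computed with continuation behavior
policy `μ`: `r̃_{T−1}(s,a) = r(s,a)²`, and for `t ≤ T−2`,
`r̃_t(s,a) = ν_{π,t}(s,a) + q_{π,t}(s,a)² + ∑_{s'} p(s'|s,a) Var(G^PDIS(τ^{μ_{t+1:T−1}}) | S_{t+1} = s')`. -/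
noncomputable def rtilde (p : S → A → S → ℝ) (r : S → A → ℝ) (π μ : ℕ → S → A → ℝ)
    (T t : ℕ) (s : S) (a : A) : ℝ :=
  if t + 1 = T then (r s a) ^ 2
  else
    nuVar p r π (T - t - 1) t s a + (qval p r π (T - t - 1) t s a) ^ 2
      + ∑ s', p s a s' * pdisVar p r π μ (T - t - 1) (t + 1) s'

/-- Total (unconditional) variance `Var(G^PDIS(τ^{μ_{0:T−1}}_{0:T−1}))` of the PDIS
estimator, including the randomness of the initial state `S_0 ∼ p0`. -/
noncomputable def pdisTotalVar (p : S → A → S → ℝ) (r : S → A → ℝ) (π μ : ℕ → S → A → ℝ)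
    (p0 : S → ℝ) (T : ℕ) : ℝ :=
  (∑ s, p0 s * expTraj p μ T 0 s (fun τ => (pdis r π μ T 0 s τ) ^ 2))
    - (∑ s, p0 s * expTraj p μ T 0 s (pdis r π μ T 0 s)) ^ 2

/-- Feasible set of the step-wise constrained problem at time `t` and state `s`:
probability distributions `ν` on `A` satisfying the coverage condition
`ν a = 0 → π_t(a|s) q_{π,t}(s,a) = 0` and the safety constraint
`∑ a, ν a * q^c_{μ*,t}(s,a) ≤ (1 + ε) v^c_{π,t}(s)`. -/
noncomputable def stepFeasible (p : S → A → S → ℝ) (r c : S → A → ℝ)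
    (π μstar : ℕ → S → A → ℝ) (T : ℕ) (ε : ℝ) (t : ℕ) (s : S) : Set (A → ℝ) :=
  {ν | (∀ a, 0 ≤ ν a) ∧ (∑ a, ν a) = 1 ∧
    (∀ a, ν a = 0 → π t s a * qval p r π (T - t - 1) t s a = 0) ∧
    (∑ a, ν a * qval p c μstar (T - t - 1) t s a) ≤ (1 + ε) * vval p c π (T - t) t s}

/-- Objective `∑_{a : ν a > 0} π_t(a|s)² r̃_t(s,a) / ν a` of the step-wise constrained
problem at time `t` and state `s`, where `r̃_t` is computed with continuation policy
`μ*_{t+1:T−1}`. -/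
noncomputable def stepObj (p : S → A → S → ℝ) (r : S → A → ℝ) (π μstar : ℕ → S → A → ℝ)
    (T t : ℕ) (s : S) (ν : A → ℝ) : ℝ :=
  ∑ a ∈ Finset.univ.filter (fun a => 0 < ν a),
    (π t s a) ^ 2 * rtilde p r π μstar T t s a / ν a

end MDPDefs

section Aux

variable {S A : Type} [Fintype S] [Fintype A]

private lemma expTraj_succ (p : S → A → S → ℝ) (μ : ℕ → S → A → ℝ) (n t : ℕ) (s : S)
    (f : (Fin (n + 1) → A × S) → ℝ) :
    expTraj p μ (n + 1) t s f
      = ∑ a, ∑ s', μ t s a * p s a s' *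
          expTraj p μ n (t + 1) s' (fun τ => f (Fin.cons (a, s') τ)) := by
  rw [expTraj]
  rw [← Equiv.sum_comp (Fin.consEquiv (fun _ : Fin (n + 1) => A × S))]
  rw [Fintype.sum_prod_type, Fintype.sum_prod_type]
  refine Finset.sum_congr rfl fun a _ => Finset.sum_congr rfl fun s' _ => ?_
  rw [expTraj, Finset.mul_sum]
  refine Finset.sum_congr rfl fun τ _ => ?_
  simp [trajProb, Fin.consEquiv]
  ring

private lemma trajProb_sum (p : S → A → S → ℝ) (μ : ℕ → S → A → ℝ)
    (hp : ∀ s a, (∑ s', p s a s') = 1) (hμ : ∀ t s, (∑ a, μ t s a) = 1) :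
    ∀ n t s, expTraj p μ n t s (fun _ => 1) = 1 := by
  intro n
  induction n with
  | zero => intro t s; simp [expTraj, trajProb]
  | succ n ih =>
      intro t s
      rw [expTraj_succ]
      simp only [ih, mul_one]
      have : ∀ a ∈ Finset.univ, ∑ s', μ t s a * p s a s' = μ t s a := by
        intro a _; rw [← Finset.mul_sum, hp, mul_one]
      rw [Finset.sum_congr rfl this, hμ]

private lemma exp_pdis_eq_vval (T : ℕ)
    (p : S → A → S → ℝ) (r : S → A → ℝ) (π μ : ℕ → S → A → ℝ)
    (hp : ∀ s a, (∀ s', 0 ≤ p s a s') ∧ (∑ s', p s a s') = 1)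
    (hμ : ∀ t s, (∀ a, 0 ≤ μ t s a) ∧ (∑ a, μ t s a) = 1)
    (hΛ : ∀ t, t < T → ∀ s a, μ t s a = 0 → π t s a * qval p r π (T - t - 1) t s a = 0) :
    ∀ n t s, t + n = T → expTraj p μ n t s (pdis r π μ n t s) = vval p r π n t s := by
  intro n
  induction n with
  | zero => intro t s _; simp [expTraj, pdis, vval]
  | succ n ih =>
      intro t s ht
      rw [expTraj_succ]
      have hinner : ∀ a s',
          expTraj p μ n (t + 1) s' (fun τ => pdis r π μ (n + 1) t s (Fin.cons (a, s') τ))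
            = π t s a / μ t s a * (r s a + vval p r π n (t + 1) s') := by
        intro a s'
        have h1 : (fun τ => pdis r π μ (n + 1) t s (Fin.cons (a, s') τ))
            = fun τ => π t s a / μ t s a * (r s a + pdis r π μ n (t + 1) s' τ) := by
          funext τ; simp [pdis]
        rw [h1]
        have h2 : ∀ τ ∈ (Finset.univ : Finset (Fin n → A × S)),
            trajProb p μ n (t + 1) s' τ *
              (π t s a / μ t s a * (r s a + pdis r π μ n (t + 1) s' τ))
            = π t s a / μ t s a *
              (r s a * (trajProb p μ n (t + 1) s' τ * 1)
                + trajProb p μ n (t + 1) s' τ * pdis r π μ n (t + 1) s' τ) := by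
          intro τ _; ring
        rw [expTraj, Finset.sum_congr rfl h2, ← Finset.mul_sum, Finset.sum_add_distrib,
          ← Finset.mul_sum]
        have hts : expTraj p μ n (t + 1) s' (fun _ => 1) = 1 :=
          trajProb_sum p μ (fun s a => (hp s a).2) (fun t s => (hμ t s).2) n (t + 1) s'
        rw [expTraj] at hts
        have hE : expTraj p μ n (t + 1) s' (pdis r π μ n (t + 1) s')
            = vval p r π n (t + 1) s' := ih (t + 1) s' (by omega)
        rw [expTraj] at hE
        rw [hts, hE, mul_one]
      simp only [hinner]
      have hstep : ∀ a ∈ (Finset.univ : Finset A),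
          ∑ s', μ t s a * p s a s' * (π t s a / μ t s a * (r s a + vval p r π n (t + 1) s'))
            = μ t s a * (π t s a / μ t s a) * qval p r π n t s a := by
        intro a _
        rw [qval]
        have h3 : ∀ s' ∈ (Finset.univ : Finset S),
            μ t s a * p s a s' * (π t s a / μ t s a * (r s a + vval p r π n (t + 1) s'))
              = μ t s a * (π t s a / μ t s a) *
                (r s a * p s a s' + p s a s' * vval p r π n (t + 1) s') := by
          intro s' _; ring
        rw [Finset.sum_congr rfl h3, ← Finset.mul_sum, Finset.sum_add_distrib,
          ← Finset.mul_sum, (hp s a).2, mul_one]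
      rw [Finset.sum_congr rfl hstep]
      have hq : ∀ a ∈ (Finset.univ : Finset A),
          μ t s a * (π t s a / μ t s a) * qval p r π n t s a
            = π t s a * qval p r π n t s a := by
        intro a _
        by_cases h : μ t s a = 0
        · have := hΛ t (by omega) s a h
          have hn : T - t - 1 = n := by omega
          rw [hn] at this
          rw [h, this]; ring
        · field_simp
      rw [Finset.sum_congr rfl hq]
      rw [vval]
      refine Finset.sum_congr rfl fun a _ => ?_
      rw [qval]

end Aux

/-- **Law of total variance over the action at time `t`.**
For every behavior policy `μ ∈ Λ`, every `t ∈ {0,…,T−2}` and every state `s`,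
`Var(G^PDIS(τ^{μ_{t:T−1}}) | S_t = s)
  = ∑_{a : μ_t(a|s)>0} μ_t(a|s) ρ_t(a|s)² Var(G^PDIS(τ^{μ_{t+1:T−1}}) | S_t = s, A_t = a)
    + Var_{a ∼ μ_t(·|s)}(ρ_t(a|s) q_{π,t}(s,a))`,
where `ρ_t(a|s) = π_t(a|s)/μ_t(a|s)` and the variance over actions is
`∑_{a : μ_t(a|s)>0} μ_t(a|s) (ρ_t(a|s) q_{π,t}(s,a))²
  − (∑_{a : μ_t(a|s)>0} μ_t(a|s) ρ_t(a|s) q_{π,t}(s,a))²`. -/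
theorem pdis_variance_action_decomposition
    {S A : Type} [Fintype S] [Fintype A]
    (T : ℕ) (hT : 1 ≤ T)
    (p : S → A → S → ℝ) (r : S → A → ℝ) (π μ : ℕ → S → A → ℝ)
    (hp : ∀ s a, (∀ s', 0 ≤ p s a s') ∧ (∑ s', p s a s') = 1)
    (hπ : ∀ t s, (∀ a, 0 ≤ π t s a) ∧ (∑ a, π t s a) = 1)
    (hμ : ∀ t s, (∀ a, 0 ≤ μ t s a) ∧ (∑ a, μ t s a) = 1)
    (hΛ : ∀ t, t < T → ∀ s a, μ t s a = 0 → π t s a * qval p r π (T - t - 1) t s a = 0) :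
    ∀ t, t + 1 < T → ∀ s : S,
      pdisVar p r π μ (T - t) t s
        = (∑ a ∈ Finset.univ.filter (fun a => 0 < μ t s a),
            μ t s a * (π t s a / μ t s a) ^ 2 * pdisVarSA p r π μ (T - t - 1) t s a)
          + ((∑ a ∈ Finset.univ.filter (fun a => 0 < μ t s a),
                μ t s a * (π t s a / μ t s a * qval p r π (T - t - 1) t s a) ^ 2)
              - (∑ a ∈ Finset.univ.filter (fun a => 0 < μ t s a),
                  μ t s a * (π t s a / μ t s a * qval p r π (T - t - 1) t s a)) ^ 2) := by
  intro t ht s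
  set n := T - t - 1 with hn
  rw [show T - t = n + 1 by omega]
  -- support fact
  have hsupp : ∀ a : A, ¬ 0 < μ t s a → μ t s a = 0 := fun a h =>
    le_antisymm (not_lt.mp h) ((hμ t s).1 a)
  -- the mean
  have hE : expTraj p μ (n + 1) t s (pdis r π μ (n + 1) t s) = vval p r π (n + 1) t s :=
    exp_pdis_eq_vval T p r π μ hp hμ hΛ (n + 1) t s (by omega)
  have hmean : vval p r π (n + 1) t s
      = ∑ a ∈ Finset.univ.filter (fun a => 0 < μ t s a),
          μ t s a * (π t s a / μ t s a * qval p r π n t s a) := by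
    rw [Finset.sum_filter, vval]
    refine Finset.sum_congr rfl fun a _ => ?_
    by_cases h : 0 < μ t s a
    · rw [if_pos h, qval]
      have hne : μ t s a ≠ 0 := ne_of_gt h
      field_simp
    · rw [if_neg h]
      have h0 := hsupp a h
      have hz := hΛ t (by omega) s a h0
      rw [show T - t - 1 = n from rfl, qval] at hz
      exact hz
  -- per-state expectations of pdis equal vval at time t+1
  have hEn' : ∀ s', expTraj p μ n (t + 1) s' (pdis r π μ n (t + 1) s')
      = vval p r π n (t + 1) s' := fun s' =>
    exp_pdis_eq_vval T p r π μ hp hμ hΛ n (t + 1) s' (by omega)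
  -- the second moment
  have hE2 : expTraj p μ (n + 1) t s (fun τ => (pdis r π μ (n + 1) t s τ) ^ 2)
      = ∑ a ∈ Finset.univ.filter (fun a => 0 < μ t s a),
          (μ t s a * (π t s a / μ t s a) ^ 2 * pdisVarSA p r π μ n t s a
            + μ t s a * (π t s a / μ t s a * qval p r π n t s a) ^ 2) := by
    rw [expTraj_succ]
    have hinner : ∀ (a : A) (s' : S),
        expTraj p μ n (t + 1) s' (fun τ => (pdis r π μ (n + 1) t s (Fin.cons (a, s') τ)) ^ 2)
          = (π t s a / μ t s a) ^ 2 *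
              ((r s a) ^ 2 + 2 * r s a * vval p r π n (t + 1) s'
                + expTraj p μ n (t + 1) s' (fun τ => (pdis r π μ n (t + 1) s' τ) ^ 2)) := by
      intro a s'
      have h1 : (fun τ => (pdis r π μ (n + 1) t s (Fin.cons (a, s') τ)) ^ 2)
          = fun τ => (π t s a / μ t s a) ^ 2 *
              ((r s a) ^ 2 + 2 * r s a * pdis r π μ n (t + 1) s' τ
                + (pdis r π μ n (t + 1) s' τ) ^ 2) := by
        funext τ; simp only [pdis, Fin.cons_zero, Fin.cons_succ]; ring
      rw [h1]
      have hts := trajProb_sum p μ (fun s a => (hp s a).2) (fun t s => (hμ t s).2) n (t + 1) s'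
      have hEn := hEn' s'
      rw [expTraj] at hts hEn
      rw [expTraj, expTraj]
      have h2 : ∀ τ ∈ (Finset.univ : Finset (Fin n → A × S)),
          trajProb p μ n (t + 1) s' τ * ((π t s a / μ t s a) ^ 2 *
            ((r s a) ^ 2 + 2 * r s a * pdis r π μ n (t + 1) s' τ
              + (pdis r π μ n (t + 1) s' τ) ^ 2))
          = (π t s a / μ t s a) ^ 2 *
              ((r s a) ^ 2 * (trajProb p μ n (t + 1) s' τ * 1)
                + 2 * r s a * (trajProb p μ n (t + 1) s' τ * pdis r π μ n (t + 1) s' τ)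
                + trajProb p μ n (t + 1) s' τ * (pdis r π μ n (t + 1) s' τ) ^ 2) := by
        intro τ _; ring
      rw [Finset.sum_congr rfl h2, ← Finset.mul_sum]
      congr 1
      rw [Finset.sum_add_distrib, Finset.sum_add_distrib, ← Finset.mul_sum, ← Finset.mul_sum,
        hts, hEn, mul_one]
    simp only [hinner]
    have hstep : ∀ a ∈ (Finset.univ : Finset A),
        (∑ s', μ t s a * p s a s' * ((π t s a / μ t s a) ^ 2 *
            ((r s a) ^ 2 + 2 * r s a * vval p r π n (t + 1) s'
              + expTraj p μ n (t + 1) s' (fun τ => (pdis r π μ n (t + 1) s' τ) ^ 2))))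
          = μ t s a * (π t s a / μ t s a) ^ 2 * pdisVarSA p r π μ n t s a
            + μ t s a * (π t s a / μ t s a * qval p r π n t s a) ^ 2 := by
      intro a _
      have key : (∑ s', μ t s a * p s a s' * ((π t s a / μ t s a) ^ 2 *
            ((r s a) ^ 2 + 2 * r s a * vval p r π n (t + 1) s'
              + expTraj p μ n (t + 1) s' (fun τ => (pdis r π μ n (t + 1) s' τ) ^ 2))))
          = μ t s a * (π t s a / μ t s a) ^ 2 *
              ((r s a) ^ 2 * (∑ s', p s a s')
                + 2 * r s a * (∑ s', p s a s' * vval p r π n (t + 1) s')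
                + ∑ s', p s a s' *
                    expTraj p μ n (t + 1) s' (fun τ => (pdis r π μ n (t + 1) s' τ) ^ 2)) := by
        simp only [mul_add, Finset.mul_sum, ← Finset.sum_add_distrib]
        exact Finset.sum_congr rfl fun s' _ => by ring
      rw [key, (hp s a).2, mul_one, pdisVarSA, qval]
      simp only [hEn']
      ring
    rw [Finset.sum_congr rfl hstep, Finset.sum_filter]
    refine Finset.sum_congr rfl fun a _ => ?_
    by_cases h : 0 < μ t s a
    · rw [if_pos h]
    · rw [if_neg h, hsupp a h]; ring
  rw [pdisVar, hE2, hE, hmean, Finset.sum_add_distrib]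
  ring
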